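/- arXiv:1408.0988 — 7 statements merged into one kernel-verified Lean document; each statement's English description precedes it below -/
import Mathlib

section
/- Let k ≥ 1, n = 2k² + 2k + 1, and let X be the circulant graph X(Z_n; {±1, ±(2k+1)}) (the extremal circulant graph of degree 4 and diameter k). Then for every l with 1 ≤ l ≤ k, the number of vertices of X at graph distance exactly l from the vertex 0 is exactly 4l; i.e., every distance partition level is maximal in the sense of the Abelian Cayley bound (LM_AC(4,l) = 4l). -/
/-- The circulant graph `X(Z_n; {±g 0, …, ±g (f-1)})`: vertices are `ZMod n`, and distinct
`u, v` are adjacent iff `v - u ≡ ±g i (mod n)` for some `i`. -/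
def circulant (n : ℕ) {f : ℕ} (g : Fin f → ℤ) : SimpleGraph (ZMod n) where
  Adj u v := u ≠ v ∧ ∃ i, v - u = (g i : ZMod n) ∨ u - v = (g i : ZMod n)
  symm := by
    constructor
    rintro u v ⟨hne, i, h | h⟩
    · exact ⟨hne.symm, i, Or.inr h⟩
    · exact ⟨hne.symm, i, Or.inl h⟩
  loopless := by constructor; rintro u ⟨hne, -⟩; exact hne rfl

/-!
Sending `c : Fin f → ℤ` to `c ⬝ᵥ g` in `ZMod n` turns walks into integer combinations of the
generators, so the distance from `0` to `v` is the least `ℓ¹`-norm of a `c` with `c ⬝ᵥ g = v`.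
For `g = (1, 2k+1)` and `n = 2k² + 2k + 1` the kernel of this map meets the `ℓ¹`-ball of
radius `2k` only in `0`, so the map is injective on the ball of radius `k`. Hence for
`1 ≤ l ≤ k` the level `l` is in bijection with the `ℓ¹`-sphere of radius `l` in `ℤ²`, which
has `4l` points.
-/

open SimpleGraph

namespace circulant

variable {n f : ℕ} {g : Fin f → ℤ}

theorem adj_iff {u v : ZMod n} :
    (circulant n g).Adj u v ↔
      u ≠ v ∧ ∃ i, v - u = (g i : ZMod n) ∨ u - v = (g i : ZMod n) :=
  Iff.rfl

-- Length `≤ 1` rather than `1`, since a generator may vanish in `ZMod n`.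
theorem exists_walk_length_le_one {x y : ZMod n} (h : ∃ i, y - x = g i ∨ x - y = g i) :
    ∃ p : (circulant n g).Walk x y, p.length ≤ 1 := by
  by_cases hxy : x = y
  · subst hxy
    exact ⟨.nil, by simp⟩
  · exact ⟨.cons (adj_iff.mpr ⟨hxy, h⟩) .nil, by simp⟩

theorem exists_walk_add_mul (x : ZMod n) (i : Fin f) (m : ℤ) :
    ∃ p : (circulant n g).Walk x (x + ((m * g i : ℤ) : ZMod n)), p.length ≤ m.natAbs := by
  induction m using Int.induction_on with
  | zero => exact ⟨Walk.nil.copy rfl (by simp), by simp⟩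
  | succ m ih =>
    obtain ⟨p, hp⟩ := ih
    obtain ⟨q, hq⟩ := exists_walk_length_le_one (x := x + (((m : ℤ) * g i : ℤ) : ZMod n))
      (y := x + ((((m : ℤ) + 1) * g i : ℤ) : ZMod n)) ⟨i, .inl (by push_cast; ring)⟩
    exact ⟨p.append q, by rw [Walk.length_append]; omega⟩
  | pred m ih =>
    obtain ⟨p, hp⟩ := ih
    obtain ⟨q, hq⟩ := exists_walk_length_le_one (x := x + (((-(m : ℤ)) * g i : ℤ) : ZMod n))
      (y := x + (((-(m : ℤ) - 1) * g i : ℤ) : ZMod n)) ⟨i, .inr (by push_cast; ring)⟩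
    exact ⟨p.append q, by rw [Walk.length_append]; omega⟩

theorem exists_walk_add_dotProduct (x : ZMod n) (c : Fin f → ℤ) :
    ∃ p : (circulant n g).Walk x (x + ((c ⬝ᵥ g : ℤ) : ZMod n)),
      p.length ≤ ∑ i, (c i).natAbs := by
  suffices ∀ s : Finset (Fin f),
      ∃ p : (circulant n g).Walk x (x + ((∑ i ∈ s, c i * g i : ℤ) : ZMod n)),
        p.length ≤ ∑ i ∈ s, (c i).natAbs from this .univ
  intro s
  induction s using Finset.induction_on with
  | empty => exact ⟨Walk.nil.copy rfl (by simp), by rw [Walk.length_copy]; simp⟩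
  | insert i s hi ih =>
    obtain ⟨p, hp⟩ := ih
    obtain ⟨q, hq⟩ :=
      exists_walk_add_mul (g := g) (x + ((∑ i ∈ s, c i * g i : ℤ) : ZMod n)) i (c i)
    refine ⟨(p.append q).copy rfl ?_, ?_⟩
    · rw [Finset.sum_insert hi]; push_cast; ring
    · rw [Walk.length_copy, Walk.length_append, Finset.sum_insert hi]; omega

theorem exists_dotProduct_of_walk {u v : ZMod n} (p : (circulant n g).Walk u v) :
    ∃ c : Fin f → ℤ, ∑ i, (c i).natAbs ≤ p.length ∧
      v - u = ((c ⬝ᵥ g : ℤ) : ZMod n) := by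
  induction p with
  | nil => exact ⟨0, by simp, by simp⟩
  | @cons u w v h q ih =>
    obtain ⟨c, hc, hv⟩ := ih
    obtain ⟨i, s, hs, hw⟩ :
        ∃ i, ∃ s : ℤ, s.natAbs = 1 ∧ w - u = ((s * g i : ℤ) : ZMod n) := by
      obtain ⟨-, i, hi | hi⟩ := adj_iff.mp h
      · exact ⟨i, 1, rfl, by simpa using hi⟩
      · exact ⟨i, -1, rfl, by rw [← neg_sub, hi]; simp⟩
    refine ⟨c + (Pi.single i s : Fin f → ℤ), ?_, ?_⟩
    · calc ∑ j, ((c + (Pi.single i s : Fin f → ℤ)) j).natAbs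
          ≤ ∑ j, ((c j).natAbs + ((Pi.single i s : Fin f → ℤ) j).natAbs) :=
            Finset.sum_le_sum fun j _ => Int.natAbs_add_le _ _
        _ = ∑ j, (c j).natAbs + 1 := by
            rw [Finset.sum_add_distrib]; simp [Pi.single_apply, apply_ite, hs]
        _ ≤ (q.cons h).length := by simp; omega
    · rw [add_dotProduct, single_dotProduct, ← sub_add_sub_cancel, hv, hw]; push_cast; ring

theorem dist_add_dotProduct_le (x : ZMod n) (c : Fin f → ℤ) :
    (circulant n g).dist x (x + ((c ⬝ᵥ g : ℤ) : ZMod n)) ≤ ∑ i, (c i).natAbs :=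
  let ⟨p, hp⟩ := exists_walk_add_dotProduct x c
  (dist_le p).trans hp

theorem reachable_add_dotProduct (x : ZMod n) (c : Fin f → ℤ) :
    (circulant n g).Reachable x (x + ((c ⬝ᵥ g : ℤ) : ZMod n)) :=
  let ⟨p, _⟩ := exists_walk_add_dotProduct x c
  ⟨p⟩

theorem exists_dotProduct_eq_dist {u v : ZMod n} (h : (circulant n g).Reachable u v) :
    ∃ c : Fin f → ℤ, ∑ i, (c i).natAbs = (circulant n g).dist u v ∧
      v - u = ((c ⬝ᵥ g : ℤ) : ZMod n) := by
  obtain ⟨p, hp⟩ := h.exists_walk_length_eq_dist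
  obtain ⟨c, hc, hv⟩ := exists_dotProduct_of_walk p
  refine ⟨c, le_antisymm (hp ▸ hc) ?_, hv⟩
  simpa [← hv] using dist_add_dotProduct_le (g := g) u c

theorem setOf_dist_eq_eq_image {l : ℕ} (hl : l ≠ 0)
    (hinj : Set.InjOn (fun c : Fin f → ℤ => ((c ⬝ᵥ g : ℤ) : ZMod n))
      {c | ∑ i, (c i).natAbs ≤ l}) :
    {v | (circulant n g).dist 0 v = l} =
      (fun c : Fin f → ℤ => ((c ⬝ᵥ g : ℤ) : ZMod n)) ''
        {c | ∑ i, (c i).natAbs = l} := by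
  ext v
  constructor
  · intro hv
    obtain ⟨c, hc, hcv⟩ := exists_dotProduct_eq_dist (Reachable.of_dist_ne_zero (hv ▸ hl))
    exact ⟨c, hc.trans hv, by simpa using hcv.symm⟩
  · rintro ⟨c, hc : ∑ i, (c i).natAbs = l, rfl⟩
    have hreach := reachable_add_dotProduct (g := g) (0 : ZMod n) c
    rw [zero_add] at hreach
    obtain ⟨c', hc', hcv'⟩ := exists_dotProduct_eq_dist hreach
    have hle := dist_add_dotProduct_le (g := g) (0 : ZMod n) c
    rw [zero_add] at hle
    obtain rfl : c' = c :=
      hinj (show _ ≤ l by omega) (show _ ≤ l by omega) (by simpa using hcv'.symm)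
    exact hc'.symm.trans hc

theorem ncard_setOf_dist_eq {l : ℕ} (hl : l ≠ 0)
    (hinj : Set.InjOn (fun c : Fin f → ℤ => ((c ⬝ᵥ g : ℤ) : ZMod n))
      {c | ∑ i, (c i).natAbs ≤ l}) :
    {v | (circulant n g).dist 0 v = l}.ncard =
      {c : Fin f → ℤ | ∑ i, (c i).natAbs = l}.ncard := by
  rw [setOf_dist_eq_eq_image hl hinj]
  exact (hinj.mono fun c (hc : _ = l) => hc.le).ncard_image

end circulant

theorem eq_zero_of_dvd_of_abs_add_abs_le {k A B : ℤ} (h : |A| + |B| ≤ 2 * k)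
    (hdvd : 2 * k ^ 2 + 2 * k + 1 ∣ A + B * (2 * k + 1)) : A = 0 ∧ B = 0 := by
  -- `|A + B (2k+1)| ≤ 2k (2k+1) < 2 (2k² + 2k + 1)`, so the quotient `m` is `-1`, `0` or `1`.
  obtain ⟨m, hm⟩ := hdvd
  have := le_abs_self A
  have := le_abs_self B
  have := neg_abs_le A
  have := neg_abs_le B
  have hk : 0 ≤ k := by linarith [abs_nonneg A, abs_nonneg B]
  have hAB : |A| + |B| * (2 * k + 1) ≤ 2 * k * (2 * k + 1) := by
    nlinarith [mul_nonneg (by linarith : (0 : ℤ) ≤ 2 * k - |A| - |B|)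
      (by linarith : (0 : ℤ) ≤ 2 * k + 1)]
  have hm_le : m ≤ 1 := by
    by_contra! hm2
    nlinarith [mul_le_mul_of_nonneg_left hm2 (by positivity : (0 : ℤ) ≤ 2 * k ^ 2 + 2 * k + 1)]
  have hm_ge : -1 ≤ m := by
    by_contra! hm2
    nlinarith [mul_le_mul_of_nonneg_left hm2 (by positivity : (0 : ℤ) ≤ 2 * k ^ 2 + 2 * k + 1)]
  interval_cases m
  · rcases le_or_gt (-B) k with hBk | hBk
    · nlinarith [mul_nonneg hk (by linarith : (0 : ℤ) ≤ k + B)]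
    · nlinarith
  · rcases lt_trichotomy B 0 with hB0 | rfl | hB0
    · nlinarith
    · simp_all
    · nlinarith
  · rcases le_or_gt B k with hBk | hBk
    · nlinarith [mul_nonneg hk (by linarith : (0 : ℤ) ≤ k - B)]
    · nlinarith

theorem injOn_dotProduct_extremal (k : ℕ) :
    Set.InjOn
      (fun c : Fin 2 → ℤ => ((c ⬝ᵥ ![1, 2 * (k : ℤ) + 1] : ℤ) : ZMod (2 * k ^ 2 + 2 * k + 1)))
      {c | ∑ i, (c i).natAbs ≤ k} := by
  intro c hc c' hc' h
  simp only [Set.mem_ofPred_eq, Fin.sum_univ_two] at hc hc'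
  have hdvd := (ZMod.intCast_eq_intCast_iff_dvd_sub _ _ _).mp h
  simp only [dotProduct, Fin.sum_univ_two, Matrix.cons_val_zero, Matrix.cons_val_one] at hdvd
  obtain ⟨h0, h1⟩ :=
    eq_zero_of_dvd_of_abs_add_abs_le (k := k) (A := c' 0 - c 0) (B := c' 1 - c 1)
      (by rw [Int.abs_eq_natAbs, Int.abs_eq_natAbs]; omega)
      (by push_cast at hdvd ⊢; convert hdvd using 1; ring)
  funext i
  fin_cases i <;> simp <;> omega

/-- Walks once around the square `|a| + |b| = l`, starting at `(l, 0)`. -/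
def l1SphereParam (l j : ℕ) : Fin 2 → ℤ :=
  if j < l then ![l - j, j]
  else if j < 2 * l then ![l - j, 2 * l - j]
  else if j < 3 * l then ![j - 3 * l, 2 * l - j]
  else ![j - 3 * l, j - 4 * l]

theorem bijOn_l1SphereParam {l : ℕ} (hl : l ≠ 0) :
    Set.BijOn (l1SphereParam l) (Set.Iio (4 * l)) {c | ∑ i, (c i).natAbs = l} := by
  refine ⟨fun j hj => ?_, fun j hj j' hj' h => ?_, fun c hc => ?_⟩
  · simp only [Set.mem_Iio] at hj
    simp only [Set.mem_ofPred_eq, Fin.sum_univ_two, l1SphereParam]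
    split_ifs <;> simp <;> omega
  · simp only [Set.mem_Iio] at hj hj'
    have h0 := congrFun h 0
    have h1 := congrFun h 1
    simp only [l1SphereParam] at h0 h1
    split_ifs at h0 h1 <;> simp at h0 h1 <;> omega
  · simp only [Set.mem_ofPred_eq, Fin.sum_univ_two] at hc
    refine ⟨if 0 < c 0 ∧ 0 ≤ c 1 then (c 1).toNat
      else if c 0 ≤ 0 ∧ 0 < c 1 then l + (-c 0).toNat
      else if c 0 < 0 ∧ c 1 ≤ 0 then 2 * l + (-c 1).toNat
      else 3 * l + (c 0).toNat, ?_, ?_⟩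
    · simp only [Set.mem_Iio]
      split_ifs <;> omega
    · funext i
      fin_cases i <;> simp only [l1SphereParam] <;> split_ifs <;> simp <;> omega

theorem ncard_l1Sphere_two {l : ℕ} (hl : l ≠ 0) :
    {c : Fin 2 → ℤ | ∑ i, (c i).natAbs = l}.ncard = 4 * l := by
  rw [← (bijOn_l1SphereParam hl).image_eq, (bijOn_l1SphereParam hl).injOn.ncard_image,
    ← Finset.coe_range, Set.ncard_coe_finset, Finset.card_range]

theorem stmt1_general (k : ℕ) (l : ℕ) (hl1 : 1 ≤ l) (hlk : l ≤ k) :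
    {v : ZMod (2*k^2+2*k+1) |
      (circulant (2*k^2+2*k+1) ![(1 : ℤ), 2*(k : ℤ)+1]).dist 0 v = l}.ncard = 4*l := by
  have hl : l ≠ 0 := by omega
  have hinj := (injOn_dotProduct_extremal k).mono fun c (hc : _ ≤ l) => hc.trans hlk
  rw [circulant.ncard_setOf_dist_eq hl hinj, ncard_l1Sphere_two hl]

/-- For the extremal circulant graph of degree 4 and diameter `k` (order `2k²+2k+1`,
generators `1` and `2k+1`), every distance partition level `l` with `1 ≤ l ≤ k` has
exactly `4l = LM_AC(4, l)` vertices, i.e. is maximal. -/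
theorem stmt1 (k : ℕ) (hk : 1 ≤ k) (l : ℕ) (hl1 : 1 ≤ l) (hlk : l ≤ k) :
    {v : ZMod (2*k^2+2*k+1) |
      (circulant (2*k^2+2*k+1) ![(1 : ℤ), 2*(k : ℤ)+1]).dist 0 v = l}.ncard = 4*l :=
  stmt1_general k l hl1 hlk
end

section
/- Let m ≥ 1, n = 32m³ + 16m² + 6m + 1, and let X be the circulant graph X(Z_n; {±1, ±(4m+1), ±(16m²+4m+1)}) (the largest known circulant graph of degree 6 and diameter k = 3m, isomorphism class 1). Then for every l with 2m + 1 ≤ l ≤ 3m, the number of vertices of X at graph distance exactly l from the vertex 0 is strictly less than 4l² + 2; i.e., every level l > ⌊(2k+1)/3⌋ is submaximal in the sense of the Abelian Cayley bound. -/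
lemma Set.ncard_image_lt_of_map_eq {α β : Type*} {s : Set α} (hs : s.Finite) {f : α → β}
    {a b : α} (ha : a ∈ s) (hb : b ∈ s) (hab : a ≠ b) (h : f a = f b) : (f '' s).ncard < s.ncard :=
  (Set.ncard_image_le hs).lt_of_ne fun h' => hab ((Set.ncard_image_iff hs).1 h' ha hb h)

def l1Norm {k : ℕ} (t : Fin k → ℤ) : ℕ := ∑ i, (t i).natAbs

def l1Sphere (k r : ℕ) : Set (Fin k → ℤ) := {t | l1Norm t = r}

def l1Ball (k r : ℕ) : Set (Fin k → ℤ) := {t | l1Norm t ≤ r}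

section L1

variable {k : ℕ}

lemma l1Norm_eq_zero_iff {t : Fin k → ℤ} : l1Norm t = 0 ↔ t = 0 := by
  simp [l1Norm, Finset.sum_eq_zero_iff, funext_iff]

lemma natAbs_le_l1Norm (t : Fin k → ℤ) (i : Fin k) : (t i).natAbs ≤ l1Norm t :=
  Finset.single_le_sum (f := fun j => (t j).natAbs) (fun _ _ => Nat.zero_le _)
    (Finset.mem_univ i)

lemma l1Norm_succ (t : Fin (k + 1) → ℤ) : l1Norm t = (t 0).natAbs + l1Norm (Fin.tail t) :=
  Fin.sum_univ_succ _

lemma l1Norm_add_le (s t : Fin k → ℤ) : l1Norm (s + t) ≤ l1Norm s + l1Norm t := by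
  rw [l1Norm, l1Norm, l1Norm, ← Finset.sum_add_distrib]
  exact Finset.sum_le_sum fun i _ => Int.natAbs_add_le _ _

lemma l1Norm_single (i : Fin k) (a : ℤ) : l1Norm (Pi.single i a) = a.natAbs := by
  simp [l1Norm, Pi.single_apply, apply_ite]

lemma finite_l1Ball (k r : ℕ) : (l1Ball k r).Finite :=
  (Set.Finite.pi fun _ => Set.finite_Icc (-(r : ℤ)) r).subset fun t ht i _ => by
    have := (natAbs_le_l1Norm t i).trans ht
    simp only [Set.mem_Icc]
    omega

lemma l1Sphere_zero (k : ℕ) : l1Sphere k 0 = {0} := by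
  ext t
  exact l1Norm_eq_zero_iff

lemma l1Ball_zero (k : ℕ) : l1Ball k 0 = {0} := by
  ext t
  exact Nat.le_zero.trans l1Norm_eq_zero_iff

lemma finite_l1Sphere (k r : ℕ) : (l1Sphere k r).Finite :=
  (finite_l1Ball k r).subset fun _ (ht : l1Norm _ = r) => ht.le

lemma ncard_l1Ball_succ_le (k r : ℕ) :
    (l1Ball k (r + 1)).ncard ≤ (l1Ball k r).ncard + (l1Sphere k (r + 1)).ncard := by
  refine le_trans (Set.ncard_le_ncard ?_ ((finite_l1Ball k r).union ?_)) (Set.ncard_union_le _ _)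
  · intro t (ht : l1Norm t ≤ r + 1)
    rcases Nat.lt_or_eq_of_le ht with h | h
    exacts [Or.inl (Nat.le_of_lt_succ h), Or.inr h]
  · exact finite_l1Sphere k (r + 1)

-- Split by the sign of `t 0`; on each half, `t 0` is determined by `Fin.tail t`, which lies in
-- the ball of radius `r + 1`, resp. `r`.
lemma ncard_l1Sphere_succ_succ_le (k r : ℕ) :
    (l1Sphere (k + 1) (r + 1)).ncard ≤ (l1Ball k (r + 1)).ncard + (l1Ball k r).ncard := by
  have hsplit : l1Sphere (k + 1) (r + 1) =
      {t ∈ l1Sphere (k + 1) (r + 1) | 0 ≤ t 0} ∪ {t ∈ l1Sphere (k + 1) (r + 1) | t 0 < 0} := by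
    ext t
    simp only [Set.mem_union, Set.mem_sep_iff, ← and_or_left, le_or_gt, and_true]
  have hinj (p : ℤ → Prop) (hp : ∀ a b, p a → p b → a.natAbs = b.natAbs → a = b) :
      Set.InjOn Fin.tail {t ∈ l1Sphere (k + 1) (r + 1) | p (t 0)} := by
    rintro s ⟨hs, hps⟩ t ⟨ht, hpt⟩ hst
    have h0 : s 0 = t 0 := hp _ _ hps hpt (by
      simp only [l1Sphere, Set.mem_ofPred_eq, l1Norm_succ] at hs ht
      rw [hst] at hs
      omega)
    rw [← Fin.cons_self_tail s, ← Fin.cons_self_tail t, h0, hst]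
  rw [hsplit]
  refine (Set.ncard_union_le _ _).trans (add_le_add ?_ ?_)
  · refine Set.ncard_le_ncard_of_injOn Fin.tail ?_ (hinj _ fun a b ha hb h => by omega)
      (finite_l1Ball _ _)
    rintro t ⟨ht, -⟩
    simp only [l1Sphere, l1Ball, Set.mem_ofPred_eq, l1Norm_succ] at ht ⊢
    omega
  · refine Set.ncard_le_ncard_of_injOn Fin.tail ?_
      (hinj _ fun a b (ha : a < 0) (hb : b < 0) h => by omega) (finite_l1Ball _ _)
    rintro t ⟨ht, hneg⟩
    simp only [l1Sphere, l1Ball, Set.mem_ofPred_eq, l1Norm_succ] at ht ⊢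
    omega

lemma ncard_l1Ball_fin_zero (r : ℕ) : (l1Ball 0 r).ncard = 1 := by
  rw [show l1Ball 0 r = Set.univ from Set.eq_univ_of_forall fun t => by simp [l1Ball, l1Norm],
    Set.ncard_univ, Nat.card_unique]

lemma ncard_l1Ball_one_le (r : ℕ) : (l1Ball 1 r).ncard ≤ 2 * r + 1 := by
  induction r with
  | zero => simp [l1Ball_zero]
  | succ r ih =>
    have hsphere : (l1Sphere 1 (r + 1)).ncard ≤ 1 + 1 := by
      simpa only [ncard_l1Ball_fin_zero] using ncard_l1Sphere_succ_succ_le 0 r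
    have := ncard_l1Ball_succ_le 1 r
    omega

lemma ncard_l1Ball_two_le (r : ℕ) : (l1Ball 2 r).ncard ≤ 2 * r ^ 2 + 2 * r + 1 := by
  induction r with
  | zero => simp [l1Ball_zero]
  | succ r ih =>
    have := ncard_l1Sphere_succ_succ_le 1 r
    have := ncard_l1Ball_succ_le 2 r
    have := ncard_l1Ball_one_le r
    have := ncard_l1Ball_one_le (r + 1)
    nlinarith

lemma ncard_l1Sphere_three_le (r : ℕ) : (l1Sphere 3 r).ncard ≤ 4 * r ^ 2 + 2 := by
  cases r with
  | zero => simp [l1Sphere_zero]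
  | succ r =>
    have := ncard_l1Sphere_succ_succ_le 2 r
    have := ncard_l1Ball_two_le r
    have := ncard_l1Ball_two_le (r + 1)
    nlinarith

end L1

namespace SimpleGraph

section TranslationInvariant

variable {A : Type*} [AddCommGroup A] {G : SimpleGraph A}

def IsTranslationInvariant (G : SimpleGraph A) : Prop :=
  ∀ u v w, G.Adj u v → G.Adj (u + w) (v + w)

lemma edist_add_right_le (hG : G.IsTranslationInvariant) (u v w : A) :
    G.edist (u + w) (v + w) ≤ G.edist u v := by
  by_cases hr : G.Reachable u v
  · obtain ⟨p, hp⟩ := hr.exists_walk_length_eq_edist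
    let τ : G →g G := ⟨(· + w), hG _ _ w⟩
    exact (edist_le (p.map τ)).trans_eq (by rw [Walk.length_map, hp])
  · simp [edist_eq_top_of_not_reachable hr]

lemma edist_zero_add_le (hG : G.IsTranslationInvariant) (x y : A) :
    G.edist 0 (x + y) ≤ G.edist 0 x + G.edist 0 y := by
  calc G.edist 0 (x + y) ≤ G.edist 0 x + G.edist (0 + x) (y + x) := by
        rw [zero_add, add_comm y]; exact G.edist_triangle
    _ ≤ G.edist 0 x + G.edist 0 y := by gcongr; exact edist_add_right_le hG 0 y x

lemma edist_zero_neg_le (hG : G.IsTranslationInvariant) (x : A) :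
    G.edist 0 (-x) ≤ G.edist 0 x := by
  simpa [edist_comm] using edist_add_right_le hG 0 x (-x)

lemma edist_zero_zsmul_le (hG : G.IsTranslationInvariant) (k : ℤ) (x : A) :
    G.edist 0 (k • x) ≤ k.natAbs * G.edist 0 x := by
  have hnat (N : ℕ) : G.edist 0 (N • x) ≤ N * G.edist 0 x := by
    induction N with
    | zero => simp
    | succ N ih =>
      calc G.edist 0 ((N + 1) • x) ≤ G.edist 0 (N • x) + G.edist 0 x := by
            rw [succ_nsmul]; exact edist_zero_add_le hG _ _
        _ ≤ (N + 1 : ℕ) * G.edist 0 x := by push_cast; rw [add_mul, one_mul]; gcongr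
  obtain ⟨N, rfl | rfl⟩ := Int.eq_nat_or_neg k
  · simpa using hnat N
  · simpa using (edist_zero_neg_le hG _).trans (hnat N)

lemma edist_zero_linearCombination_le (hG : G.IsTranslationInvariant)
    {ι : Type*} [Fintype ι] (x : ι → A) (t : ι → ℤ) :
    G.edist 0 (Fintype.linearCombination ℤ x t) ≤ ∑ i, (t i).natAbs * G.edist 0 (x i) :=
  (Finset.le_sum_of_subadditive _ (by simp) (edist_zero_add_le hG) _ _).trans
    (Finset.sum_le_sum fun i _ => edist_zero_zsmul_le hG _ _)

end TranslationInvariant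

end SimpleGraph

open SimpleGraph

section Circulant

variable {n f : ℕ} {g : Fin f → ℤ}

lemma circulant_isTranslationInvariant : (circulant n g).IsTranslationInvariant := by
  rintro u v w ⟨hne, i, hi⟩
  exact ⟨by simpa using hne, i, by simpa only [add_sub_add_right_eq_sub] using hi⟩

lemma circulant_edist_zero_le_one (i : Fin f) : (circulant n g).edist 0 (g i : ZMod n) ≤ 1 := by
  rw [edist_le_one_iff_adj_or_eq]
  by_cases h : (g i : ZMod n) = 0
  · exact Or.inr h.symm
  · exact Or.inl ⟨Ne.symm h, i, Or.inl (sub_zero _)⟩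

lemma circulant_edist_zero_le_l1Norm (t : Fin f → ℤ) :
    (circulant n g).edist 0 (Fintype.linearCombination ℤ (fun i => (g i : ZMod n)) t) ≤
      l1Norm t := by
  refine (edist_zero_linearCombination_le circulant_isTranslationInvariant _ t).trans ?_
  rw [l1Norm, Nat.cast_sum]
  refine Finset.sum_le_sum fun i _ => ?_
  calc ((t i).natAbs : ℕ∞) * (circulant n g).edist 0 (g i : ZMod n) ≤ (t i).natAbs * 1 := by
        gcongr; exact circulant_edist_zero_le_one i
    _ = (t i).natAbs := mul_one _

lemma circulant_exists_l1Norm_le_length (u v : ZMod n) (p : (circulant n g).Walk u v) :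
    ∃ t : Fin f → ℤ, l1Norm t ≤ p.length ∧
      v - u = Fintype.linearCombination ℤ (fun i => (g i : ZMod n)) t := by
  induction p with
  | nil => exact ⟨0, by simp [l1Norm], by simp⟩
  | @cons u w v h q ih =>
    rw [Walk.length_cons]
    obtain ⟨t, ht, hvw⟩ := ih
    obtain ⟨-, i, hi⟩ := h
    obtain ⟨e, he, hwu⟩ : ∃ e : ℤ, e.natAbs = 1 ∧ w - u = e • (g i : ZMod n) :=
      hi.elim (fun h => ⟨1, rfl, by rw [h, one_zsmul]⟩)
        (fun h => ⟨-1, rfl, by rw [neg_one_zsmul, ← h, neg_sub]⟩)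
    refine ⟨t + Pi.single i e, ?_, ?_⟩
    · calc l1Norm (t + Pi.single i e) ≤ l1Norm t + l1Norm (Pi.single i e) := l1Norm_add_le _ _
        _ ≤ q.length + 1 := by rw [l1Norm_single, he]; omega
    · rw [map_add, Fintype.linearCombination_apply_single, ← hvw, ← hwu]
      abel

lemma setOf_circulant_dist_eq_subset_image {l : ℕ} (hl : l ≠ 0) :
    {v | (circulant n g).dist 0 v = l} ⊆
      Fintype.linearCombination ℤ (fun i => (g i : ZMod n)) '' l1Sphere f l := by
  intro v hv
  have hr : (circulant n g).Reachable 0 v := Reachable.of_dist_ne_zero (hv.symm ▸ hl)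
  obtain ⟨p, hp⟩ := hr.exists_walk_length_eq_dist
  obtain ⟨t, ht, hvt⟩ := circulant_exists_l1Norm_le_length 0 v p
  rw [sub_zero] at hvt
  refine ⟨t, le_antisymm (ht.trans_eq (hp.trans hv)) ?_, hvt.symm⟩
  have := circulant_edist_zero_le_l1Norm (n := n) (g := g) t
  rw [← hvt, ← hr.coe_dist_eq_edist, hv] at this
  exact_mod_cast this

end Circulant

theorem stmt3_general (m : ℕ) (hm : 1 ≤ m) (l : ℕ) (hl1 : 2*m+1 ≤ l) :
    {v : ZMod (32*m^3+16*m^2+6*m+1) |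
      (circulant (32*m^3+16*m^2+6*m+1)
        ![(1 : ℤ), 4*(m : ℤ)+1, 16*(m : ℤ)^2+4*m+1]).dist 0 v = l}.ncard < 4*l^2+2 := by
  set n := 32*m^3+16*m^2+6*m+1
  set g : Fin 3 → ℤ := ![1, 4*(m : ℤ)+1, 16*(m : ℤ)^2+4*m+1]
  set φ := Fintype.linearCombination ℤ (fun i => (g i : ZMod n))
  set T₁ : Fin 3 → ℤ := ![1, 2*m-1, 2*m-l]
  set T₂ : Fin 3 → ℤ := ![0, -(2*m+1), 2*m+1-l]
  have hT₁ : T₁ ∈ l1Sphere 3 l := by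
    simp only [T₁, l1Sphere, Set.mem_ofPred_eq, l1Norm, Fin.sum_univ_three, Matrix.cons_val_zero,
      Matrix.cons_val_one, Matrix.cons_val]
    omega
  have hT₂ : T₂ ∈ l1Sphere 3 l := by
    simp only [T₂, l1Sphere, Set.mem_ofPred_eq, l1Norm, Fin.sum_univ_three, Matrix.cons_val_zero,
      Matrix.cons_val_one, Matrix.cons_val]
    omega
  have hφ : φ T₁ = φ T₂ := by
    simp only [φ, g, T₁, T₂, Fintype.linearCombination_apply, Fin.sum_univ_three,
      Matrix.cons_val_zero, Matrix.cons_val_one, Matrix.cons_val, zsmul_eq_mul]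
    push_cast
    ring
  calc _ ≤ (φ '' l1Sphere 3 l).ncard :=
        Set.ncard_le_ncard (setOf_circulant_dist_eq_subset_image (by omega))
          ((finite_l1Sphere 3 l).image _)
    _ < (l1Sphere 3 l).ncard := Set.ncard_image_lt_of_map_eq (finite_l1Sphere 3 l) hT₁ hT₂
          (fun h => by simpa [T₁, T₂] using congrFun h 0) hφ
    _ ≤ 4*l^2+2 := ncard_l1Sphere_three_le l

/-- For the largest known circulant graph of degree 6 and diameter `k = 3m` (isomorphism
class 1; order `n = 32m³+16m²+6m+1`, generators `1`, `4m+1`, `16m²+4m+1`), every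
distance partition level `l` with `2m+1 ≤ l ≤ 3m` is submaximal: it has strictly fewer
than `4l²+2 = LM_AC(6, l)` vertices. -/
theorem stmt3 (m : ℕ) (hm : 1 ≤ m) (l : ℕ) (hl1 : 2*m+1 ≤ l) (hl2 : l ≤ 3*m) :
    {v : ZMod (32*m^3+16*m^2+6*m+1) |
      (circulant (32*m^3+16*m^2+6*m+1)
        ![(1 : ℤ), 4*(m : ℤ)+1, 16*(m : ℤ)^2+4*m+1]).dist 0 v = l}.ncard < 4*l^2+2 :=
  stmt3_general m hm l hl1
end

section
/- Let k ≥ 1, n = 2k² + 2k + 1, and let X be the circulant graph X(Z_n; {±1, ±(2k+1)}) (the extremal circulant graph of degree 4 and diameter k). Then the odd girth of X is maximal for its diameter, namely 2k+1: X contains a cycle of odd length 2k+1, and X contains no closed walk of odd length strictly less than 2k+1. -/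
open SimpleGraph Function

lemma SimpleGraph.cycleGraph_isContained_of_injective {V : Type*} {G : SimpleGraph V} {m : ℕ}
    [NeZero m] {f : Fin m → V} (hf : Injective f) (hadj : ∀ i, G.Adj (f i) (f (i + 1))) :
    cycleGraph m ⊑ G := by
  have eq_add_one {u v : Fin m} (h : (u - v).val = 1) : u = v + 1 := by
    rw [← sub_eq_iff_eq_add']
    exact Fin.ext (by rw [h, Fin.val_one', Nat.mod_eq_of_lt (h ▸ (u - v).isLt)])
  refine ⟨Hom.toCopy ⟨f, fun {u v} huv => ?_⟩ hf⟩
  rcases cycleGraph_adj'.mp huv with h | h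
  · exact eq_add_one h ▸ (hadj v).symm
  · exact eq_add_one h ▸ hadj u

section circulant

variable {n f : ℕ} {g : Fin f → ℤ}

lemma circulant_exists_sign_of_adj {u v : ZMod n} (h : (circulant n g).Adj u v) :
    ∃ i ε, (ε = 1 ∨ ε = -1) ∧ v - u = ((ε * g i : ℤ) : ZMod n) := by
  obtain ⟨-, i, h | h⟩ := h
  · exact ⟨i, 1, .inl rfl, by simpa using h⟩
  · exact ⟨i, -1, .inr rfl, by push_cast; rw [← h]; ring⟩

theorem circulant_exists_coeffs_of_walk {u v : ZMod n} (w : (circulant n g).Walk u v) :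
    ∃ c : Fin f → ℤ, v - u = ((∑ i, c i * g i : ℤ) : ZMod n) ∧
      ∑ i, |c i| ≤ w.length ∧ ∑ i, c i ≡ w.length [ZMOD 2] := by
  induction w with
  | nil => exact ⟨0, by simp, by simp, by simp⟩
  | @cons u b v h p ih =>
    obtain ⟨c, hsum, hnorm, hpar⟩ := ih
    obtain ⟨i, ε, hε, hstep⟩ := circulant_exists_sign_of_adj h
    have hε_abs : |ε| = 1 := by rcases hε with rfl | rfl <;> rfl
    refine ⟨fun j => c j + if j = i then ε else 0, ?_, ?_, ?_⟩
    · have hweighted :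
          ∑ j, (c j + if j = i then ε else 0) * g j = ∑ j, c j * g j + ε * g i := by
        simp [add_mul, Finset.sum_add_distrib]
      rw [hweighted, Int.cast_add, ← hsum, ← hstep]
      ring
    · calc ∑ j, |c j + if j = i then ε else 0|
          ≤ ∑ j, (|c j| + |if j = i then ε else 0|) :=
            Finset.sum_le_sum fun j _ => abs_add_le _ _
        _ = ∑ j, |c j| + 1 := by
            rw [Finset.sum_add_distrib]
            simp [apply_ite, hε_abs]
        _ ≤ (p.cons h).length := by rw [Walk.length_cons]; push_cast; linarith
    · have htotal : ∑ j, (c j + if j = i then ε else 0) = ∑ j, c j + ε := by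
        simp [Finset.sum_add_distrib]
      rw [htotal, Walk.length_cons]
      push_cast
      exact hpar.add (by rcases hε with rfl | rfl <;> decide)

end circulant

theorem two_mul_add_one_le_abs_add_abs {k : ℕ} {x y : ℤ} (hxy : x ≠ 0 ∨ y ≠ 0)
    (hdvd : (2 * k ^ 2 + 2 * k + 1 : ℤ) ∣ x + (2 * k + 1) * y) :
    2 * k + 1 ≤ |x| + |y| := by
  by_contra! hsmall
  obtain ⟨m, hm⟩ := hdvd
  have habs_mul : |(2 * k + 1) * y| = (2 * k + 1) * |y| := by
    rw [abs_mul, abs_of_nonneg (by positivity)]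
  have hupper : |x + (2 * k + 1) * y| ≤ |x| + (2 * k + 1) * |y| :=
    habs_mul ▸ abs_add_le _ _
  have hlower : (2 * k + 1) * |y| - |x| ≤ |x + (2 * k + 1) * y| := by
    rw [← habs_mul, add_comm x]
    exact abs_sub_abs_le_abs_add ((2 * k + 1) * y) x
  have habs_n : |(2 * k ^ 2 + 2 * k + 1 : ℤ)| = 2 * k ^ 2 + 2 * k + 1 :=
    abs_of_pos (by positivity)
  rw [hm, abs_mul, habs_n] at hupper hlower
  have hx := abs_nonneg x
  have hy := abs_nonneg y
  have hk : (0 : ℤ) ≤ k := k.cast_nonneg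
  rcases (abs_nonneg m).eq_or_lt with hm0 | hm_pos
  · have hy0 : y = 0 := abs_eq_zero.mp (by nlinarith)
    have hx0 : x = 0 := by simpa [hy0, abs_eq_zero.mp hm0.symm] using hm
    exact hxy.elim (· hx0) (· hy0)
  · have hm1 : |m| = 1 := le_antisymm (by nlinarith) hm_pos
    rw [hm1] at hupper hlower
    rcases le_or_gt |y| k with hyk | hyk
    · nlinarith [mul_le_mul_of_nonneg_left hyk hk]
    · nlinarith [mul_le_mul_of_nonneg_left (Int.add_one_le_of_lt hyk) hk]

-- Truncated subtraction: `i` up to `i = k + 1`, then steps of `2k + 1`, reaching `n` at `2k + 1`.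
def extremalCycleVertex (k i : ℕ) : ℕ := i + 2 * k * (i - (k + 1))

namespace extremalCycleVertex

lemma succ_of_le {k i : ℕ} (hi : i ≤ k) :
    extremalCycleVertex k (i + 1) = extremalCycleVertex k i + 1 := by
  simp only [extremalCycleVertex, Nat.sub_eq_zero_of_le (by omega : i ≤ k + 1),
    Nat.sub_eq_zero_of_le (by omega : i + 1 ≤ k + 1)]
  ring

lemma succ_of_lt {k i : ℕ} (hi : k < i) :
    extremalCycleVertex k (i + 1) = extremalCycleVertex k i + (2 * k + 1) := by
  simp only [extremalCycleVertex, show i + 1 - (k + 1) = i - (k + 1) + 1 by omega]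
  ring

lemma strictMono (k : ℕ) : StrictMono (extremalCycleVertex k) :=
  strictMono_nat_of_lt_succ fun i => by
    rcases le_or_gt i k with hi | hi
    · rw [succ_of_le hi]; omega
    · rw [succ_of_lt hi]; omega

lemma two_mul_add_one (k : ℕ) : extremalCycleVertex k (2 * k + 1) = 2 * k ^ 2 + 2 * k + 1 := by
  simp only [extremalCycleVertex, show 2 * k + 1 - (k + 1) = k by omega]
  ring

end extremalCycleVertex

theorem cycleGraph_isContained_circulant {k : ℕ} (hk : 1 ≤ k) :
    cycleGraph (2 * k + 1) ⊑
      circulant (2 * k ^ 2 + 2 * k + 1) ![(1 : ℤ), 2 * (k : ℤ) + 1] := by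
  set n := 2 * k ^ 2 + 2 * k + 1
  let φ : Fin (2 * k + 1) → ZMod n := fun i => (extremalCycleVertex k i : ZMod n)
  have hlt (i : Fin (2 * k + 1)) : extremalCycleVertex k i < n :=
    (extremalCycleVertex.strictMono k i.isLt).trans_eq (extremalCycleVertex.two_mul_add_one k)
  have hinj : Injective φ := fun i j hij => by
    rw [ZMod.natCast_eq_natCast_iff', Nat.mod_eq_of_lt (hlt i), Nat.mod_eq_of_lt (hlt j)] at hij
    exact Fin.ext ((extremalCycleVertex.strictMono k).injective hij)
  have hsucc (i : Fin (2 * k + 1)) : φ (i + 1) = (extremalCycleVertex k (i + 1) : ZMod n) := by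
    simp only [φ, Fin.val_add_one]
    split_ifs with hi
    · rw [hi, Fin.val_last, extremalCycleVertex.two_mul_add_one, ZMod.natCast_self]
      simp [extremalCycleVertex]
    · rfl
  refine cycleGraph_isContained_of_injective hinj fun i => ⟨hinj.ne ?_, ?_⟩
  · exact left_ne_add.mpr (Fin.one_eq_zero_iff.not.mpr (by omega))
  · rcases le_or_gt (i : ℕ) k with hi | hi
    · refine ⟨0, .inl ?_⟩
      rw [hsucc, extremalCycleVertex.succ_of_le hi]
      simp [φ]
    · refine ⟨1, .inl ?_⟩
      rw [hsucc, extremalCycleVertex.succ_of_lt hi]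
      simp [φ]

/-- The extremal circulant graph of degree 4 and diameter `k` (order `n = 2k²+2k+1`,
generators `1`, `2k+1`) has maximal odd girth `2k+1`: it contains a cycle of (odd)
length `2k+1`, and no closed walk of odd length strictly less than `2k+1`. -/
theorem stmt7 (k : ℕ) (hk : 1 ≤ k) :
    let n : ℕ := 2*k^2+2*k+1
    let X := circulant n ![(1 : ℤ), 2*(k : ℤ)+1]
    (∃ (v : ZMod n) (w : X.Walk v v), w.IsCycle ∧ w.length = 2*k+1) ∧
    (∀ (v : ZMod n) (w : X.Walk v v), Odd w.length → 2*k+1 ≤ w.length) := by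
  intro n X
  refine ⟨(cycleGraph_isContained_iff (by omega)).mp (cycleGraph_isContained_circulant hk),
    fun v w hodd => ?_⟩
  obtain ⟨c, hsum, hnorm, hpar⟩ := circulant_exists_coeffs_of_walk w
  simp only [Fin.sum_univ_two, Matrix.cons_val_zero, Matrix.cons_val_one, sub_self]
    at hsum hnorm hpar
  have hdvd : (2 * k ^ 2 + 2 * k + 1 : ℤ) ∣ c 0 + (2 * k + 1) * c 1 := by
    have := (ZMod.intCast_zmod_eq_zero_iff_dvd _ n).mp hsum.symm
    push_cast [n] at this
    simpa [mul_comm] using this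
  have hne : c 0 ≠ 0 ∨ c 1 ≠ 0 := by
    by_contra! h
    rw [h.1, h.2, Int.ModEq] at hpar
    have := Nat.odd_iff.mp hodd
    omega
  have hbound := two_mul_add_one_le_abs_add_abs hne hdvd
  omega
end

section
/- Let m ≥ 1, n = 32m³ + 16m² + 6m + 1, and let X be the circulant graph X(Z_n; {±1, ±(4m+1), ±(16m²+4m+1)}) (the largest known circulant graph of degree 6 and diameter k = 3m, isomorphism class 1). Then the odd girth of X is maximal for its diameter, namely 2k+1 = 6m+1: X contains a cycle of odd length 6m+1, and X contains no closed walk of odd length strictly less than 6m+1. -/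
open SimpleGraph Finset

lemma ZMod.intCast_ne_intCast_of_lt {n : ℕ} {a b : ℤ} (hab : a < b) (hba : b - a < n) :
    (a : ZMod n) ≠ b := by
  rw [ne_eq, ZMod.intCast_eq_intCast_iff_dvd_sub]
  exact fun h => (sub_pos.2 hab).ne' (Int.eq_zero_of_dvd_of_nonneg_of_lt (by omega) hba h)

theorem SimpleGraph.exists_isCycle_of_injOn {V : Type*} (G : SimpleGraph V) {N : ℕ} (hN : 3 ≤ N)
    (p : ℕ → V) (hinj : Set.InjOn p (Set.Iio N)) (hp : p N = p 0)
    (hadj : ∀ i < N, G.Adj (p i) (p (i + 1))) :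
    ∃ (v : V) (w : G.Walk v v), w.IsCycle ∧ w.length = N := by
  rw [← cycleGraph_isContained_iff (by omega)]
  obtain ⟨N, rfl⟩ : ∃ N', N = N' + 2 := ⟨N - 2, by omega⟩
  have hsucc : ∀ u : Fin (N + 2), G.Adj (p u) (p ↑(u + 1)) := by
    intro u
    rw [Fin.val_add_one]
    split_ifs with hu
    · rw [hu, Fin.val_last, ← hp]
      exact hadj _ (by omega)
    · exact hadj _ u.2
  refine ⟨⟨⟨fun j => p j, fun {u v} huv => ?_⟩, fun u v h => Fin.ext (hinj u.2 v.2 h)⟩⟩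
  rcases cycleGraph_adj.1 huv with h | h
  · rw [sub_eq_iff_eq_add'] at h
    exact (h ▸ hsucc v).symm
  · rw [sub_eq_iff_eq_add'] at h
    exact h ▸ hsucc u

theorem circulant.exists_isCycle {n f : ℕ} (g : Fin f → ℤ) {N : ℕ} (hN : 3 ≤ N) (q : ℕ → ℤ)
    (hq : StrictMono q) (hqN : q N = q 0 + n) (hstep : ∀ i < N, ∃ j, q (i + 1) - q i = g j) :
    ∃ (v : ZMod n) (w : (circulant n g).Walk v v), w.IsCycle ∧ w.length = N := by
  have hne : ∀ i j, i < j → j < N → (q i : ZMod n) ≠ q j := fun i j hij hj =>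
    ZMod.intCast_ne_intCast_of_lt (hq hij) (by linarith [hq hj, hq.monotone (Nat.zero_le i)])
  have hinj : Set.InjOn (fun i => (q i : ZMod n)) (Set.Iio N) := fun i hi j hj hij => by
    by_contra h
    rcases Nat.lt_or_gt_of_ne h with h | h
    exacts [hne i j h hj hij, hne j i h hi hij.symm]
  have hp : (q N : ZMod n) = q 0 := by simp [hqN]
  refine exists_isCycle_of_injOn _ hN _ hinj hp fun i hi => ⟨fun h => ?_, ?_⟩
  · rcases Nat.lt_or_ge (i + 1) N with hi' | hi'
    · exact absurd (hinj hi hi' h) (by omega)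
    · rw [show i + 1 = N by omega, hp] at h
      exact absurd (hinj hi (Set.mem_Iio.2 (by omega)) h) (by omega)
  · obtain ⟨j, hj⟩ := hstep i hi
    exact ⟨j, Or.inl (by rw [← hj]; push_cast; ring)⟩

theorem circulant.exists_coeffs_of_walk {n f : ℕ} (g : Fin f → ℤ) {u v : ZMod n}
    (w : (circulant n g).Walk u v) :
    ∃ x : Fin f → ℤ, ∑ i, |x i| ≤ w.length ∧ ∑ i, x i ≡ w.length [ZMOD 2] ∧
      v - u = ((∑ i, x i * g i : ℤ) : ZMod n) := by
  induction w with
  | nil => exact ⟨0, by simp, by simp, by simp⟩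
  | @cons u y v huy p ih =>
    obtain ⟨x, hbd, hpar, hsum⟩ := ih
    obtain ⟨i, ε, hε, hstep⟩ :
        ∃ i, ∃ ε : ℤ, (ε = 1 ∨ ε = -1) ∧ y - u = ((ε * g i : ℤ) : ZMod n) := by
      obtain ⟨i, h | h⟩ := huy.2
      · exact ⟨i, 1, Or.inl rfl, by rw [one_mul, h]⟩
      · exact ⟨i, -1, Or.inr rfl, by push_cast; rw [← h]; ring⟩
    have hsingle (j : Fin f) :
        |(Pi.single i ε : Fin f → ℤ) j| = (Pi.single i 1 : Fin f → ℤ) j := by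
      rcases hε with rfl | rfl <;> by_cases hj : j = i <;> simp [hj]
    rw [Walk.length_cons]
    refine ⟨x + Pi.single i ε, ?_, ?_, ?_⟩
    · calc ∑ j, |(x + Pi.single i ε : Fin f → ℤ) j|
          ≤ ∑ j, (|x j| + (Pi.single i 1 : Fin f → ℤ) j) :=
            sum_le_sum fun j _ => (abs_add_le _ _).trans_eq (by rw [hsingle])
        _ = ∑ j, |x j| + 1 := by rw [sum_add_distrib, sum_pi_single']; simp
        _ ≤ ((p.length + 1 : ℕ) : ℤ) := by push_cast; linarith
    · have : ε ≡ 1 [ZMOD 2] := by rcases hε with rfl | rfl <;> rfl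
      simpa [sum_add_distrib] using hpar.add this
    · rw [← sub_add_sub_cancel, hsum, hstep]
      simp [add_mul, sum_add_distrib, Pi.single_apply]

lemma abs_add_mul_le {a b q : ℤ} (hq : 0 ≤ q) : |a + b * q| ≤ |a| + |b| * q := by
  simpa [abs_mul, abs_of_nonneg hq] using abs_add_le a (b * q)

lemma le_abs_add_abs_of_add_mul_eq {a b q x y k : ℤ} (hq : 1 ≤ q) (h : a + b * q = x * q + y)
    (hky : k ≤ y) (hkq : k ≤ q + 1 - y) : x + k ≤ |a| + |b| := by
  rcases le_or_gt b x with hb | hb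
  · nlinarith [le_abs_self a, le_abs_self b, mul_nonneg (sub_nonneg.2 hb) (sub_nonneg.2 hq)]
  · nlinarith [neg_le_abs a, le_abs_self b,
      mul_nonneg (sub_nonneg.2 (show x + 1 ≤ b by omega)) (show 0 ≤ q + 1 by omega)]

lemma le_abs_add_abs_add_abs_of_eq_order {M a b c : ℤ} (hM : 0 ≤ M)
    (h : a + b * (4*M+1) + c * (16*M^2+4*M+1) = 32*M^3+16*M^2+6*M+1) :
    6*M+1 ≤ |a| + |b| + |c| := by
  have hq : 1 ≤ 4*M+1 := by omega
  -- only `c = 2M` and `c = 2M+1` admit representations of cost exactly `6M+1`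
  obtain hc | rfl | rfl | hc : c ≤ 2*M-1 ∨ c = 2*M ∨ c = 2*M+1 ∨ 2*M+2 ≤ c := by omega
  · have hlt : 6*M * (4*M+1) < (|a| + |b|) * (4*M+1) := calc
      6*M * (4*M+1) < a + b * (4*M+1) := by
        nlinarith [mul_nonneg (by omega : 0 ≤ 2*M-1-c) (by positivity : 0 ≤ 16*M^2+4*M+1)]
      _ ≤ |a + b * (4*M+1)| := le_abs_self _
      _ ≤ |a| + |b| * (4*M+1) := abs_add_mul_le (by omega)
      _ ≤ (|a| + |b|) * (4*M+1) := by nlinarith [abs_nonneg a]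
    linarith [lt_of_mul_lt_mul_right hlt (by omega), abs_nonneg c]
  · have := le_abs_add_abs_of_add_mul_eq (a := a) (b := b) (x := 2*M) (k := 2*M+1) hq
      (by linear_combination h) le_rfl (by omega)
    rw [abs_of_nonneg (by omega : 0 ≤ 2*M)]
    linarith
  · have := le_abs_add_abs_of_add_mul_eq (a := -a) (b := -b) (x := 2*M-1) (k := 2*M+1) hq
      (by linear_combination -h) le_rfl (by omega)
    rw [abs_neg, abs_neg] at this
    rw [abs_of_nonneg (by omega : 0 ≤ 2*M+1)]
    linarith
  · have hlt : (6*M-1) * (4*M+1) < (|a| + |b|) * (4*M+1) := calc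
      (6*M-1) * (4*M+1) < -(a + b * (4*M+1)) := by
        nlinarith [mul_nonneg (by omega : 0 ≤ c-2*M-2) (by positivity : 0 ≤ 16*M^2+4*M+1)]
      _ ≤ |a + b * (4*M+1)| := neg_le_abs _
      _ ≤ |a| + |b| * (4*M+1) := abs_add_mul_le (by omega)
      _ ≤ (|a| + |b|) * (4*M+1) := by nlinarith [abs_nonneg a]
    linarith [lt_of_mul_lt_mul_right hlt (by omega), le_abs_self c]

lemma le_abs_add_abs_add_abs_of_odd {M a b c k : ℤ} (hM : 0 ≤ M)
    (h : a + b * (4*M+1) + c * (16*M^2+4*M+1) = (32*M^3+16*M^2+6*M+1) * k)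
    (hodd : Odd (a + b + c)) : 6*M+1 ≤ |a| + |b| + |c| := by
  by_contra! hlt
  have hk_odd : Odd k := by
    have : Odd ((32*M^3+16*M^2+6*M+1) * k) := by
      rw [← h, show a + b * (4*M+1) + c * (16*M^2+4*M+1)
        = a + b + c + 2 * (2*M*b + (8*M^2+2*M)*c) by ring]
      exact hodd.add_even (even_two_mul _)
    exact (Int.odd_mul.mp this).2
  have hk : |k| < 3 := by
    have hn : 0 < 32*M^3+16*M^2+6*M+1 := by positivity
    have hS := calc (32*M^3+16*M^2+6*M+1) * |k|
        = |a + b * (4*M+1) + c * (16*M^2+4*M+1)| := by rw [h, abs_mul, abs_of_pos hn]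
      _ ≤ |a + b * (4*M+1)| + |c| * (16*M^2+4*M+1) := abs_add_mul_le (by positivity)
      _ ≤ |a| + |b| * (4*M+1) + |c| * (16*M^2+4*M+1) := by
        linarith [abs_add_mul_le (a := a) (b := b) (by omega : 0 ≤ 4*M+1)]
      _ ≤ (|a| + |b| + |c|) * (16*M^2+4*M+1) := by
        nlinarith [abs_nonneg a, abs_nonneg b, mul_nonneg (abs_nonneg a) (sq_nonneg M)]
      _ ≤ 6*M * (16*M^2+4*M+1) := by gcongr; omega
    nlinarith
  obtain rfl | rfl : k = 1 ∨ k = -1 := by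
    obtain ⟨t, rfl⟩ := hk_odd
    rw [abs_lt] at hk
    omega
  · linarith [le_abs_add_abs_add_abs_of_eq_order hM (h.trans (mul_one _))]
  · have := le_abs_add_abs_add_abs_of_eq_order (a := -a) (b := -b) (c := -c) hM
      (by linear_combination -h)
    simp only [abs_neg] at this
    linarith

def cycleStep (m i : ℕ) : ℤ :=
  if i < 2*m then 16*m^2+4*m+1 else if i < 4*m then 4*m+1 else 1

lemma cycleStep_pos (m i : ℕ) : 0 < cycleStep m i := by
  unfold cycleStep; split_ifs <;> positivity

lemma strictMono_sum_range_cycleStep (m : ℕ) :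
    StrictMono fun j => ∑ i ∈ range j, cycleStep m i :=
  strictMono_nat_of_lt_succ fun j => by simpa [sum_range_succ] using cycleStep_pos m j

lemma sum_range_cycleStep (m : ℕ) :
    ∑ i ∈ range (6*m+1), cycleStep m i = 32*m^3+16*m^2+6*m+1 := by
  have h₁ : ∀ i ∈ range (2*m), cycleStep m i = 16*m^2+4*m+1 :=
    fun i hi => if_pos (mem_range.1 hi)
  have h₂ : ∀ i ∈ range (2*m), cycleStep m (2*m + i) = 4*m+1 :=
    fun i hi => (if_neg (by omega)).trans (if_pos (by have := mem_range.1 hi; omega))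
  have h₃ : ∀ i ∈ range (2*m+1), cycleStep m (2*m + (2*m + i)) = 1 :=
    fun i _ => (if_neg (by omega)).trans (if_neg (by omega))
  rw [show 6*m+1 = 2*m + (2*m + (2*m+1)) by ring, sum_range_add, sum_range_add,
    sum_congr rfl h₁, sum_congr rfl h₂, sum_congr rfl h₃]
  simp only [sum_const, card_range, nsmul_eq_mul]
  push_cast
  ring

/-- The largest known circulant graph of degree 6 and diameter `k = 3m` (isomorphism
class 1; order `n = 32m³+16m²+6m+1`, generators `1`, `4m+1`, `16m²+4m+1`) has maximal
odd girth `2k+1 = 6m+1`: it contains a cycle of (odd) length `6m+1`, and no closed walk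
of odd length strictly less than `6m+1`. -/
theorem stmt8 (m : ℕ) (hm : 1 ≤ m) :
    let n : ℕ := 32*m^3+16*m^2+6*m+1
    let X := circulant n ![(1 : ℤ), 4*(m : ℤ)+1, 16*(m : ℤ)^2+4*m+1]
    (∃ (v : ZMod n) (w : X.Walk v v), w.IsCycle ∧ w.length = 6*m+1) ∧
    (∀ (v : ZMod n) (w : X.Walk v v), Odd w.length → 6*m+1 ≤ w.length) := by
  intro n X
  refine ⟨?_, fun v w hodd => ?_⟩
  · refine circulant.exists_isCycle _ (by omega) _ (strictMono_sum_range_cycleStep m)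
      (by simp [n, sum_range_cycleStep]) fun i _ => ?_
    rw [sum_range_succ, add_sub_cancel_left]
    unfold cycleStep
    split_ifs
    exacts [⟨2, rfl⟩, ⟨1, rfl⟩, ⟨0, rfl⟩]
  · obtain ⟨x, hbd, hpar, hsum⟩ := circulant.exists_coeffs_of_walk _ w
    simp only [Fin.sum_univ_three] at hbd hpar hsum
    rw [sub_self, eq_comm, ZMod.intCast_zmod_eq_zero_iff_dvd] at hsum
    obtain ⟨k, hk⟩ := hsum
    have := le_abs_add_abs_add_abs_of_odd (M := m) (a := x 0) (b := x 1) (c := x 2) (k := k)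
      (by positivity)
      (by simp only [n, Matrix.cons_val_zero, Matrix.cons_val_one, Matrix.cons_val, mul_one] at hk
          push_cast at hk
          linear_combination hk)
      (by rw [Int.odd_iff, hpar]; exact_mod_cast Nat.odd_iff.1 hodd)
    omega
end

section
/- Let m ≥ 2, n = 8m⁴ + 8m³ + 12m² + 4m, and let X be the circulant graph X(Z_n; {±1, ±(4m³+4m²+6m+1), ±(4m⁴+4m²−4m), ±(4m⁴+4m²−2m)}) (the largest known circulant graph of degree 8 and diameter k = 2m). Then the odd girth of X is maximal for its diameter, namely 2k+1 = 4m+1: X contains a cycle of odd length 4m+1, and X contains no closed walk of odd length strictly less than 4m+1. -/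
namespace SimpleGraph.Walk

variable {V : Type*} {G : SimpleGraph V}

theorem exists_odd_isCycle_or_isPath [DecidableEq V] {u v : V} (p : G.Walk u v) :
    (∃ (x : V) (c : G.Walk x x), c.IsCycle ∧ Odd c.length ∧ c.length ≤ p.length) ∨
      ∃ q : G.Walk u v, q.IsPath ∧ q.length ≤ p.length ∧ q.length % 2 = p.length % 2 := by
  induction p with
  | nil => exact Or.inr ⟨nil, .nil, le_rfl, rfl⟩
  | @cons u x v h p ih =>
    rcases ih with ⟨y, c, hc, hodd, hle⟩ | ⟨q, hq, hle, hpar⟩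
    · exact Or.inl ⟨y, c, hc, hodd, by rw [length_cons]; omega⟩
    by_cases hu : u ∈ q.support
    · have hlen := congrArg length (q.take_spec hu)
      rw [length_append] at hlen
      rcases Nat.even_or_odd (q.takeUntil u hu).length with heven | hodd
      · refine Or.inl ⟨u, cons h (q.takeUntil u hu), ?_, ?_, ?_⟩
        · refine (cons_isCycle_iff _ h).mpr ⟨hq.takeUntil hu, fun he => ?_⟩
          have := (hq.takeUntil hu).length_eq_one_of_mem_edges (Sym2.eq_swap ▸ he)
          rw [this] at heven
          exact Nat.not_even_one heven
        · rw [length_cons]; exact heven.add_one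
        · rw [length_cons, length_cons]; omega
      · refine Or.inr ⟨q.dropUntil u hu, hq.dropUntil hu, ?_, ?_⟩ <;>
          rw [length_cons] <;> obtain ⟨k, hk⟩ := hodd <;> omega
    · exact Or.inr ⟨cons h q, hq.cons hu, by simp only [length_cons]; omega,
        by simp only [length_cons]; omega⟩

theorem exists_odd_isCycle_of_odd_length {v : V} (w : G.Walk v v) (hw : Odd w.length) :
    ∃ (x : V) (c : G.Walk x x), c.IsCycle ∧ Odd c.length ∧ c.length ≤ w.length := by
  classical
  refine w.exists_odd_isCycle_or_isPath.resolve_right ?_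
  rintro ⟨q, hq, -, hpar⟩
  rw [length_eq_zero_iff.mpr (isPath_iff_nil.mp hq)] at hpar
  exact Nat.not_even_iff_odd.mpr hw (Nat.even_iff.mpr hpar.symm)

end SimpleGraph.Walk

namespace SimpleGraph

variable {α ι : Type*} [AddCommGroup α] {G : SimpleGraph α}

theorem exists_walk_add_nsmul {y : α} (hy : ∀ v, G.Adj v (v + y)) (u : α) (k : ℕ) :
    ∃ w : G.Walk u (u + k • y), w.length = k := by
  induction k generalizing u with
  | zero => exact ⟨Walk.nil.copy rfl (by simp), by simp⟩
  | succ k ih =>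
    obtain ⟨w, hw⟩ := ih (u + y)
    exact ⟨(Walk.cons (hy u) w).copy rfl (by rw [succ_nsmul']; abel), by simp [hw]⟩

theorem exists_walk_add_sum_nsmul [Fintype ι] {x : ι → α} (hx : ∀ i v, G.Adj v (v + x i))
    (k : ι → ℕ) (u : α) : ∃ w : G.Walk u (u + ∑ i, k i • x i), w.length = ∑ i, k i := by
  classical
  suffices ∀ s : Finset ι, ∃ w : G.Walk u (u + ∑ i ∈ s, k i • x i), w.length = ∑ i ∈ s, k i from
    this Finset.univ
  intro s
  induction s using Finset.induction_on with
  | empty =>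
    exact ⟨Walk.nil.copy rfl (by simp), by rw [Walk.length_copy, Walk.length_nil, Finset.sum_empty]⟩
  | insert j s hj ih =>
    obtain ⟨w₁, hw₁⟩ := ih
    obtain ⟨w₂, hw₂⟩ := exists_walk_add_nsmul (hx j) (u + ∑ i ∈ s, k i • x i) (k j)
    refine ⟨(w₁.append w₂).copy rfl (by rw [Finset.sum_insert hj]; abel), ?_⟩
    rw [Walk.length_copy, Walk.length_append, hw₁, hw₂, Finset.sum_insert hj, add_comm]

theorem exists_coeffs_of_walk [Fintype ι] [DecidableEq ι] {x : ι → α}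
    (hG : ∀ u v, G.Adj u v → ∃ i, v - u = x i ∨ u - v = x i) {u v : α} (p : G.Walk u v) :
    ∃ c : ι → ℤ, ∑ i, c i • x i = v - u ∧ ∑ i, |c i| ≤ p.length ∧
      ∑ i, c i ≡ p.length [ZMOD 2] := by
  induction p with
  | nil => exact ⟨0, by simp, by simp, by simp [Int.ModEq]⟩
  | @cons u y v h p ih =>
    obtain ⟨c, hsum, hnorm, hpar⟩ := ih
    obtain ⟨i, σ, hσ, hstep⟩ : ∃ i, ∃ σ : ℤ, |σ| = 1 ∧ y - u = σ • x i := by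
      obtain ⟨i, hi | hi⟩ := hG u y h
      · exact ⟨i, 1, abs_one, by rw [hi, one_smul]⟩
      · exact ⟨i, -1, by simp, by rw [← hi, neg_one_smul, neg_sub]⟩
    have hlen : ((Walk.cons h p).length : ℤ) = p.length + 1 := by simp
    refine ⟨fun j => c j + if j = i then σ else 0, ?_, ?_, ?_⟩
    · simp only [add_smul, Finset.sum_add_distrib, hsum, ite_smul, zero_smul,
        Finset.sum_ite_eq', Finset.mem_univ, if_true, ← hstep]
      abel
    · rw [hlen]
      calc ∑ j, |c j + if j = i then σ else 0| ≤ ∑ j, (|c j| + |if j = i then σ else 0|) :=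
            Finset.sum_le_sum fun j _ => abs_add_le _ _
        _ = ∑ j, |c j| + 1 := by
            simp only [Finset.sum_add_distrib, apply_ite abs, abs_zero, Finset.sum_ite_eq',
              Finset.mem_univ, if_true, hσ]
        _ ≤ p.length + 1 := by linarith
    · rw [hlen]
      simp only [Finset.sum_add_distrib, Finset.sum_ite_eq', Finset.mem_univ, if_true]
      have : σ ≡ 1 [ZMOD 2] := by
        rcases (abs_eq zero_le_one).mp hσ with rfl | rfl <;> decide
      exact hpar.add this

end SimpleGraph

theorem ZMod.intCast_ne_zero_of_pos_of_lt {n : ℕ} {x : ℤ} (h0 : 0 < x) (hn : x < n) :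
    (x : ZMod n) ≠ 0 := fun h =>
  h0.ne' <| Int.eq_zero_of_dvd_of_nonneg_of_lt h0.le hn <|
    (ZMod.intCast_zmod_eq_zero_iff_dvd x n).mp h

theorem circulant_adj_add {n f : ℕ} {g : Fin f → ℤ} {i : Fin f} (hi : (g i : ZMod n) ≠ 0)
    (v : ZMod n) : (circulant n g).Adj v (v + g i) :=
  ⟨fun h => hi (left_eq_add.mp h), i, Or.inl (add_sub_cancel_left v _)⟩

/-- The solutions `(a, b, c, d)` of the relation are exactly the combinations
`ε (2m, 0, 1, -1) + s (-m, m, -1, 1) + r (0, 0, m, m+1) + q (-1, 1, m+1, -m)`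
with `s ≡ q + r (mod 2)`. -/
theorem exists_lattice_coords_of_relation (m a b c d e : ℤ)
    (heq : a + b*(4*m^3+4*m^2+6*m+1) + c*(4*m^4+4*m^2-4*m) + d*(4*m^4+4*m^2-2*m)
      = e*(8*m^4+8*m^3+12*m^2+4*m))
    (hodd : Odd (a+b+c+d)) :
    ∃ ε s r q : ℤ, Odd s ∧ Odd (q + r) ∧ a = (2*ε-s)*m - q ∧ b = s*m+q ∧
      c = (r+q)*m + q - s + ε ∧ d = (r-q)*m + r + s - ε := by
  set ε := e*(4*m^3+4*m^2+6*m+2) - b*(2*m^2+2*m+3) - c*(2*m^3+2*m-2) - d*(2*m^3+2*m-1)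
  set r := c + d - b + (2*e - c - d)*m
  set s := 2*e - c - d + 2*r
  set q := b - s*m
  have ha : a = (2*ε-s)*m - q := by linear_combination heq
  have hc : c = (r+q)*m + q - s + ε := by ring
  have hd : d = (r-q)*m + r + s - ε := by ring
  obtain ⟨k, hk⟩ := hodd
  refine ⟨ε, s, r, q, ⟨e + r + ε*m - k - 1, ?_⟩, ⟨k - ε*m - r*m, ?_⟩, ha, by ring, hc, hd⟩
  · linear_combination ha - hk
  · linear_combination hk - ha

theorem abs_coords_le_of_norm_le (m ε s r q : ℤ) (hm : 2 ≤ m) (hs : Odd s)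
    (hN : |(2*ε-s)*m - q| + |s*m+q| + |(r+q)*m + q - s + ε| + |(r-q)*m + r + s - ε| ≤ 4*m-1) :
    |ε| ≤ 1 ∧ |s| ≤ 3 ∧ |r| ≤ 1 ∧ |q| ≤ 1 := by
  set A := (2*ε-s)*m - q with hA
  set B := s*m+q with hB
  set C := (r+q)*m + q - s + ε with hC
  set D := (r-q)*m + r + s - ε with hD
  have hm0 : 0 < m := by omega
  have hε : 2*m*|ε| ≤ |A| + |B| := by
    rw [← abs_of_pos (by omega : 0 < 2*m), ← abs_mul,
      show 2*m*ε = A + B by rw [hA, hB]; ring]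
    exact abs_add_le A B
  have hr : (2*m+1)*|r| ≤ |C| + |D| + |q| := by
    rw [← abs_of_pos (by omega : 0 < 2*m+1), ← abs_mul,
      show (2*m+1)*r = C + D - q by rw [hC, hD]; ring]
    exact (abs_sub _ _).trans (by linarith [abs_add_le C D])
  have hq : (2*m^2+m+2)*|q| ≤ m*(|C| + |D|) + m*|r| + (|A| + |B|) := by
    rw [← abs_of_pos (by positivity : 0 < 2*m^2+m+2), ← abs_mul,
      show (2*m^2+m+2)*q = m*(C - D) + m*r - (A - B) by rw [hA, hB, hC, hD]; ring]
    calc |m*(C - D) + m*r - (A - B)| ≤ |m*(C - D)| + |m*r| + |A - B| :=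
          (abs_sub _ _).trans (by linarith [abs_add_le (m*(C - D)) (m*r)])
      _ ≤ m*(|C| + |D|) + m*|r| + (|A| + |B|) := by
          rw [abs_mul, abs_mul, abs_of_pos hm0]
          gcongr
          exacts [abs_sub _ _, abs_sub _ _]
  have hsm : |s| * m ≤ |B| + |q| := by
    rw [← abs_of_pos hm0, ← abs_mul, show s*m = B - q by rw [hB]; ring]
    exact abs_sub _ _
  have hε1 : |ε| ≤ 1 := by nlinarith [abs_nonneg C, abs_nonneg D]
  have hq1 : |q| ≤ 1 := by
    nlinarith [abs_nonneg A, abs_nonneg B, abs_nonneg C, abs_nonneg D, abs_nonneg r]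
  have hr1 : |r| ≤ 1 := by nlinarith [abs_nonneg A, abs_nonneg B]
  have hs4 : |s| ≤ 4 := by nlinarith [abs_nonneg A, abs_nonneg C, abs_nonneg D]
  obtain ⟨k, hk⟩ := hs
  refine ⟨hε1, ?_, hr1, hq1⟩
  rw [abs_le] at hs4 ⊢
  omega

theorem four_mul_add_one_le_norm_of_abs_le (m ε s r q : ℤ) (hs : Odd s)
    (hqr : Odd (q + r)) (hε : |ε| ≤ 1) (hs3 : |s| ≤ 3) (hr : |r| ≤ 1) (hq : |q| ≤ 1) :
    4*m+1 ≤ |(2*ε-s)*m - q| + |s*m+q| + |(r+q)*m + q - s + ε| + |(r-q)*m + r + s - ε| := by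
  rw [abs_le] at hε hs3 hr hq
  obtain ⟨k, rfl⟩ := hs
  rw [Int.odd_iff] at hqr
  obtain ⟨hε1, hε2⟩ := hε; obtain ⟨hq1, hq2⟩ := hq; obtain ⟨hr1, hr2⟩ := hr
  obtain ⟨hk1, hk2⟩ : -2 ≤ k ∧ k ≤ 1 := by omega
  simp only [Int.abs_eq_natAbs]
  interval_cases ε <;> interval_cases q <;> interval_cases r <;> interval_cases k <;> omega

theorem four_mul_add_one_le_norm (m ε s r q : ℤ) (hm : 2 ≤ m) (hs : Odd s) (hqr : Odd (q + r)) :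
    4*m+1 ≤ |(2*ε-s)*m - q| + |s*m+q| + |(r+q)*m + q - s + ε| + |(r-q)*m + r + s - ε| := by
  by_contra! hlt
  have hN : |(2*ε-s)*m - q| + |s*m+q| + |(r+q)*m + q - s + ε| + |(r-q)*m + r + s - ε|
      ≤ 4*m-1 := by
    obtain ⟨k, hk⟩ := hqr
    have hsum : (2*ε-s)*m - q + (s*m+q) + ((r+q)*m + q - s + ε) + ((r-q)*m + r + s - ε)
        = 2*(m*ε + m*r + k) + 1 := by linear_combination hk
    generalize (2*ε-s)*m - q = A, s*m+q = B, (r+q)*m + q - s + ε = C,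
      (r-q)*m + r + s - ε = D at hsum hlt ⊢
    simp only [Int.abs_eq_natAbs] at hlt ⊢
    omega
  obtain ⟨hε, hs3, hr, hq⟩ := abs_coords_le_of_norm_le m ε s r q hm hs hN
  exact hlt.not_ge (four_mul_add_one_le_norm_of_abs_le m ε s r q hs hqr hε hs3 hr hq)

theorem four_mul_add_one_le_of_relation (m a b c d e : ℤ) (hm : 2 ≤ m)
    (heq : a + b*(4*m^3+4*m^2+6*m+1) + c*(4*m^4+4*m^2-4*m) + d*(4*m^4+4*m^2-2*m)
      = e*(8*m^4+8*m^3+12*m^2+4*m))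
    (hodd : Odd (a+b+c+d)) :
    4*m+1 ≤ |a| + |b| + |c| + |d| := by
  obtain ⟨ε, s, r, q, hs, hqr, rfl, rfl, rfl, rfl⟩ :=
    exists_lattice_coords_of_relation m a b c d e heq hodd
  exact four_mul_add_one_le_norm m ε s r q hm hs hqr

def deg8Order (m : ℕ) : ℕ := 8*m^4+8*m^3+12*m^2+4*m

def deg8Gens (m : ℕ) : Fin 4 → ℤ :=
  ![1, 4*(m : ℤ)^3+4*m^2+6*m+1, 4*(m : ℤ)^4+4*m^2-4*m, 4*(m : ℤ)^4+4*m^2-2*m]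

theorem deg8Order_cast (m : ℕ) : (deg8Order m : ℤ) = 8*(m : ℤ)^4+8*m^3+12*m^2+4*m := by
  push_cast [deg8Order]; ring

theorem deg8_four_mul_add_one_le_length_of_odd {m : ℕ} (hm : 2 ≤ m) {v : ZMod (deg8Order m)}
    (w : (circulant (deg8Order m) (deg8Gens m)).Walk v v) (hw : Odd w.length) :
    4*m+1 ≤ w.length := by
  obtain ⟨c, hsum, hnorm, hpar⟩ := SimpleGraph.exists_coeffs_of_walk
    (G := circulant (deg8Order m) (deg8Gens m)) (x := fun i => (deg8Gens m i : ZMod (deg8Order m)))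
    (fun _ _ h => h.2) w
  rw [sub_self] at hsum
  obtain ⟨e, he⟩ := (ZMod.intCast_zmod_eq_zero_iff_dvd (∑ i, c i * deg8Gens m i) _).mp
    (by push_cast; simpa only [zsmul_eq_mul] using hsum)
  simp only [Fin.sum_univ_four] at he hnorm hpar
  have hodd : Odd (c 0 + c 1 + c 2 + c 3) := by
    rw [Int.odd_iff]; rw [Int.ModEq] at hpar; rw [Nat.odd_iff] at hw; omega
  have := four_mul_add_one_le_of_relation m (c 0) (c 1) (c 2) (c 3) e (by exact_mod_cast hm)
    (by rw [deg8Order_cast] at he; simp [deg8Gens] at he; linear_combination he) hodd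
  omega

theorem deg8_exists_walk_length_four_mul_add_one {m : ℕ} (hm : 0 < m) :
    ∃ w : (circulant (deg8Order m) (deg8Gens m)).Walk 0 0, w.length = 4*m+1 := by
  have hm' : (1 : ℤ) ≤ m := by exact_mod_cast hm
  have hm2 : (m : ℤ) ≤ m^2 := by nlinarith
  have hgen : ∀ i v, (circulant (deg8Order m) (deg8Gens m)).Adj v (v + deg8Gens m i) := by
    intro i
    refine circulant_adj_add (ZMod.intCast_ne_zero_of_pos_of_lt ?_ ?_) <;>
      fin_cases i <;> simp [deg8Gens, deg8Order_cast] <;> nlinarith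
  obtain ⟨w, hw⟩ := SimpleGraph.exists_walk_add_sum_nsmul hgen ![m, m, m, m+1] 0
  have hzero : 0 + ∑ i, ![m, m, m, m+1] i • (deg8Gens m i : ZMod (deg8Order m)) = 0 := by
    have : ((∑ i, (![m, m, m, m+1] i : ℤ) * deg8Gens m i : ℤ) : ZMod (deg8Order m)) = 0 :=
      (ZMod.intCast_zmod_eq_zero_iff_dvd _ _).mpr
        ⟨m, by simp [Fin.sum_univ_four, deg8Order_cast, deg8Gens]; ring⟩
    push_cast at this
    simpa [nsmul_eq_mul] using this
  refine ⟨w.copy rfl hzero, ?_⟩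
  rw [SimpleGraph.Walk.length_copy, hw]
  simp [Fin.sum_univ_four]
  ring

/-- The largest known circulant graph of degree 8 and diameter `k = 2m` (order
`n = 8m⁴+8m³+12m²+4m`, generators `1`, `4m³+4m²+6m+1`, `4m⁴+4m²−4m`, `4m⁴+4m²−2m`)
has maximal odd girth `2k+1 = 4m+1`: it contains a cycle of (odd) length `4m+1`, and no
closed walk of odd length strictly less than `4m+1`. -/
theorem stmt9 (m : ℕ) (hm : 2 ≤ m) :
    let n : ℕ := 8*m^4+8*m^3+12*m^2+4*m
    let X := circulant n ![(1 : ℤ), 4*(m : ℤ)^3+4*m^2+6*m+1,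
      4*(m : ℤ)^4+4*m^2-4*m, 4*(m : ℤ)^4+4*m^2-2*m]
    (∃ (v : ZMod n) (w : X.Walk v v), w.IsCycle ∧ w.length = 4*m+1) ∧
    (∀ (v : ZMod n) (w : X.Walk v v), Odd w.length → 4*m+1 ≤ w.length) := by
  intro n X
  have hlower : ∀ (v : ZMod n) (w : X.Walk v v), Odd w.length → 4*m+1 ≤ w.length :=
    fun _ w hw => deg8_four_mul_add_one_le_length_of_odd hm w hw
  obtain ⟨w, hw⟩ := deg8_exists_walk_length_four_mul_add_one (by omega : 0 < m)
  obtain ⟨x, c, hc, hodd, hle⟩ := w.exists_odd_isCycle_of_odd_length (hw ▸ ⟨2*m, by ring⟩)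
  exact ⟨⟨x, c, hc, le_antisymm (hw ▸ hle) (hlower x c hodd)⟩, hlower⟩
end

section
/- Let n be a positive integer, f ≥ 1, and let g_1,…,g_f be integers with 0 < g_1 < … < g_f < n/2, and let X be the circulant graph X(Z_n; {±g_1,…,±g_f}). Let v be a vertex with dist(0,v) = l ≥ 2, and suppose there exist integers a_1,…,a_f with Σ_i |a_i| = l, Σ_i a_i g_i ≡ v (mod n), and a_i ≠ 0, a_j ≠ 0 for two distinct indices i ≠ j. Then v has at least two distinct neighbors at distance l−1 from 0; in particular v is not of type T_1. -/
/-! Translations of `ZMod n` are automorphisms of the circulant graph, so `x ↦ edist 0 x` is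
subadditive and even; as each `± gᵢ` is a neighbour of `0`, the vertex `∑ aᵢ gᵢ` lies within
`∑ |aᵢ|` of `0`. If `v = ∑ aᵢ gᵢ` with `∑ |aᵢ| = dist 0 v` and `aₖ ≠ 0`, then replacing `aₖ` by
`aₖ - sign aₖ` shows that the neighbour `v - (sign aₖ) gₖ` of `v` is at distance exactly
`dist 0 v - 1`. For `k = i` and `k = j` these neighbours differ, because
`0 < |(sign aᵢ) gᵢ - (sign aⱼ) gⱼ| < n`. -/

theorem ZMod.eq_of_intCast_eq_of_abs_sub_lt {n : ℕ} {x y : ℤ} (hxy : |x - y| < n)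
    (h : (x : ZMod n) = y) : x = y := by
  rw [ZMod.intCast_eq_intCast_iff_dvd_sub] at h
  have := Int.eq_zero_of_abs_lt_dvd h (by rwa [abs_sub_comm])
  omega

theorem Int.natAbs_sub_sign_add_one {a : ℤ} (ha : a ≠ 0) : (a - a.sign).natAbs + 1 = a.natAbs := by
  rcases ha.lt_or_gt with h | h
  · rw [Int.sign_eq_neg_one_of_neg h]; omega
  · rw [Int.sign_eq_one_of_pos h]; omega

theorem Int.abs_sign_mul_of_ne_zero {a : ℤ} (ha : a ≠ 0) (b : ℤ) : |a.sign * b| = |b| := by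
  rw [abs_mul, Int.abs_sign_of_ne_zero ha, one_mul]

namespace SimpleGraph

variable {V W : Type*} {G : SimpleGraph V} {G' : SimpleGraph W}

theorem edist_map_le (φ : G →g G') (u v : V) : G'.edist (φ u) (φ v) ≤ G.edist u v := by
  by_cases h : G.Reachable u v
  · obtain ⟨p, hp⟩ := h.exists_walk_length_eq_edist
    rw [← hp, ← Walk.length_map φ]
    exact G'.edist_le _
  · rw [edist_eq_top_of_not_reachable h]
    exact le_top

theorem Iso.edist_eq (φ : G ≃g G') (u v : V) : G'.edist (φ u) (φ v) = G.edist u v :=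
  le_antisymm (edist_map_le φ.toHom u v) <| by
    simpa using edist_map_le φ.symm.toHom (φ u) (φ v)

end SimpleGraph

namespace Circulant

variable {n f : ℕ} {g : Fin f → ℤ}

theorem adj_add_right_iff (c u v : ZMod n) :
    (circulant n g).Adj (u + c) (v + c) ↔ (circulant n g).Adj u v := by
  simp only [circulant, ne_eq, add_left_inj, add_sub_add_right_eq_sub]

def addRight (g : Fin f → ℤ) (c : ZMod n) : circulant n g ≃g circulant n g where
  toEquiv := Equiv.addRight c
  map_rel_iff' := adj_add_right_iff c _ _

theorem edist_add_right (c u v : ZMod n) :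
    (circulant n g).edist (u + c) (v + c) = (circulant n g).edist u v :=
  (addRight g c).edist_eq u v

theorem edist_zero_add_le (x y : ZMod n) :
    (circulant n g).edist 0 (x + y) ≤ (circulant n g).edist 0 x + (circulant n g).edist 0 y :=
  calc (circulant n g).edist 0 (x + y)
      ≤ (circulant n g).edist 0 x + (circulant n g).edist x (x + y) :=
        SimpleGraph.edist_triangle
    _ = (circulant n g).edist 0 x + (circulant n g).edist 0 y := by
        rw [← edist_add_right x 0 y, zero_add, add_comm y]

theorem edist_zero_neg (x : ZMod n) :
    (circulant n g).edist 0 (-x) = (circulant n g).edist 0 x := by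
  rw [← edist_add_right x, zero_add, neg_add_cancel, SimpleGraph.edist_comm]

theorem edist_zero_zsmul_le (m : ℤ) (x : ZMod n) :
    (circulant n g).edist 0 (m • x) ≤ m.natAbs • (circulant n g).edist 0 x := by
  have hnsmul (k : ℕ) : (circulant n g).edist 0 (k • x) ≤ k • (circulant n g).edist 0 x := by
    simpa using Finset.le_sum_of_subadditive _ SimpleGraph.edist_self.le edist_zero_add_le
      (Finset.range k) fun _ ↦ x
  obtain ⟨k, rfl | rfl⟩ := Int.eq_nat_or_neg m
  · simpa using hnsmul k
  · simpa [edist_zero_neg] using hnsmul k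

theorem adj_zero_of_abs_eq {k : Fin f} (hpos : 0 < g k) (hhalf : 2 * g k < n) {c : ℤ}
    (hc : |c| = g k) : (circulant n g).Adj 0 (c : ZMod n) := by
  refine ⟨fun h ↦ ?_, k, ?_⟩
  · have hc0 : c = 0 := ZMod.eq_of_intCast_eq_of_abs_sub_lt (n := n) (y := 0)
      (by rw [sub_zero, hc]; omega) (by simpa using h.symm)
    rw [hc0, abs_zero] at hc
    omega
  · rcases abs_eq hpos.le |>.mp hc with rfl | rfl <;> simp

theorem edist_zero_sum_le (hpos : ∀ i, 0 < g i) (hhalf : ∀ i, 2 * g i < n) (s : Finset (Fin f))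
    (a : Fin f → ℤ) :
    (circulant n g).edist 0 (((∑ i ∈ s, a i * g i : ℤ) : ZMod n)) ≤ ∑ i ∈ s, (a i).natAbs := by
  have hgen (i : Fin f) : (circulant n g).edist 0 (g i : ZMod n) = 1 :=
    SimpleGraph.edist_eq_one_iff_adj.mpr <|
      adj_zero_of_abs_eq (hpos i) (hhalf i) (abs_of_pos (hpos i))
  push_cast
  refine (Finset.le_sum_of_subadditive _ SimpleGraph.edist_self.le edist_zero_add_le _ _).trans ?_
  refine Finset.sum_le_sum fun i _ ↦ ?_
  simpa [hgen, zsmul_eq_mul] using edist_zero_zsmul_le (g := g) (a i) (g i : ZMod n)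


theorem edist_zero_sub_sign_mul_add_one_le (hpos : ∀ i, 0 < g i) (hhalf : ∀ i, 2 * g i < n)
    (a : Fin f → ℤ) {k : Fin f} (hak : a k ≠ 0) :
    (circulant n g).edist 0 (((∑ i, a i * g i : ℤ) : ZMod n) - ((a k).sign * g k : ℤ)) + 1
      ≤ ∑ i, (a i).natAbs := by
  set s := (a k).sign
  have hsplit : ((∑ i, a i * g i : ℤ) : ZMod n) - (s * g k : ℤ) =
      ((∑ i ∈ {k}, (a i - s) * g i : ℤ) : ZMod n) +
        ((∑ i ∈ Finset.univ.erase k, a i * g i : ℤ) : ZMod n) := by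
    rw [← Finset.add_sum_erase _ _ (Finset.mem_univ k), Finset.sum_singleton]
    push_cast
    ring
  have hnorm : ∑ i ∈ {k}, (a i - s).natAbs + ∑ i ∈ Finset.univ.erase k, (a i).natAbs + 1 =
      ∑ i, (a i).natAbs := by
    rw [Finset.sum_singleton, add_right_comm, Int.natAbs_sub_sign_add_one hak]
    exact Finset.add_sum_erase _ (fun i ↦ (a i).natAbs) (Finset.mem_univ k)
  rw [hsplit, ← hnorm]
  push_cast
  gcongr
  exact (edist_zero_add_le _ _).trans <|
    add_le_add (by exact_mod_cast edist_zero_sum_le hpos hhalf _ _)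
      (by exact_mod_cast edist_zero_sum_le hpos hhalf _ _)

theorem adj_and_dist_sub_sign_mul (hpos : ∀ i, 0 < g i) (hhalf : ∀ i, 2 * g i < n) {v : ZMod n}
    {l : ℕ} (hdist : (circulant n g).dist 0 v = l) (a : Fin f → ℤ)
    (hnorm : ∑ i, (a i).natAbs = l) (hrep : ((∑ i, a i * g i : ℤ) : ZMod n) = v) {k : Fin f}
    (hak : a k ≠ 0) :
    (circulant n g).Adj v (v - ((a k).sign * g k : ℤ)) ∧
      (circulant n g).dist 0 (v - ((a k).sign * g k : ℤ)) = l - 1 := by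
  set u := v - (((a k).sign * g k : ℤ) : ZMod n)
  have hadj : (circulant n g).Adj v u := by
    have h0 := adj_zero_of_abs_eq (hpos k) (hhalf k)
      (by rw [Int.abs_sign_mul_of_ne_zero hak, abs_of_pos (hpos k)])
    rw [← adj_add_right_iff u] at h0
    simpa [u] using h0.symm
  have hu : (circulant n g).edist 0 u + 1 ≤ l := by
    simpa [u, hrep, hnorm] using edist_zero_sub_sign_mul_add_one_le hpos hhalf a hak
  obtain ⟨m, hm⟩ :=
    ENat.ne_top_iff_exists.mp (le_self_add.trans hu |>.trans_lt (ENat.natCast_lt_top l)).ne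
  have hv : (circulant n g).edist 0 v ≤ m + 1 := by
    rw [hm, ← SimpleGraph.edist_eq_one_iff_adj.mpr hadj.symm]
    exact SimpleGraph.edist_triangle
  have hreach : (circulant n g).Reachable 0 v :=
    SimpleGraph.reachable_of_edist_ne_top (hv.trans_lt (ENat.natCast_lt_top (m + 1))).ne
  rw [← hreach.coe_dist_eq_edist, hdist] at hv
  rw [← hm] at hu
  norm_cast at hu hv
  refine ⟨hadj, ?_⟩
  rw [SimpleGraph.dist, ← hm, ENat.toNat_natCast]
  omega

end Circulant

theorem stmt12_general (n f : ℕ) (g : Fin f → ℤ)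
    (hpos : ∀ i, 0 < g i) (hmono : StrictMono g) (hhalf : ∀ i, 2 * g i < n)
    (v : ZMod n) (l : ℕ) (hdist : (circulant n g).dist 0 v = l)
    (a : Fin f → ℤ) (hnorm : ∑ i, (a i).natAbs = l)
    (hrep : ((∑ i, a i * g i : ℤ) : ZMod n) = v)
    (i j : Fin f) (hij : i ≠ j) (hai : a i ≠ 0) (haj : a j ≠ 0) :
    ∃ u₁ u₂ : ZMod n, u₁ ≠ u₂ ∧
      ((circulant n g).Adj v u₁ ∧ (circulant n g).dist 0 u₁ = l - 1) ∧
      ((circulant n g).Adj v u₂ ∧ (circulant n g).dist 0 u₂ = l - 1) := by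
  have habs_i : |(a i).sign * g i| = g i := by
    rw [Int.abs_sign_mul_of_ne_zero hai, abs_of_pos (hpos i)]
  have habs_j : |(a j).sign * g j| = g j := by
    rw [Int.abs_sign_mul_of_ne_zero haj, abs_of_pos (hpos j)]
  refine ⟨_, _, fun h ↦ hij (hmono.injective ?_),
    Circulant.adj_and_dist_sub_sign_mul hpos hhalf hdist a hnorm hrep hai,
    Circulant.adj_and_dist_sub_sign_mul hpos hhalf hdist a hnorm hrep haj⟩
  have hsteps : (a i).sign * g i = (a j).sign * g j := by
    refine ZMod.eq_of_intCast_eq_of_abs_sub_lt ((abs_sub _ _).trans_lt ?_) (sub_right_injective h)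
    linarith [hhalf i, hhalf j]
  rw [← habs_i, ← habs_j, hsteps]

/-- If a vertex `v` at distance `l ≥ 2` from `0` in a circulant graph admits a
representation `v ≡ Σ aᵢ gᵢ (mod n)` with `Σ |aᵢ| = l` using at least two distinct
generators, then `v` has at least two distinct neighbours at distance `l−1` from `0`;
in particular `v` is not of type `T₁`. -/
theorem stmt12 (n f : ℕ) (hn : 0 < n) (hf : 1 ≤ f) (g : Fin f → ℤ)
    (hpos : ∀ i, 0 < g i) (hmono : StrictMono g) (hhalf : ∀ i, 2 * g i < n)
    (v : ZMod n) (l : ℕ) (hl : 2 ≤ l) (hdist : (circulant n g).dist 0 v = l)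
    (a : Fin f → ℤ) (hnorm : ∑ i, (a i).natAbs = l)
    (hrep : ((∑ i, a i * g i : ℤ) : ZMod n) = v)
    (i j : Fin f) (hij : i ≠ j) (hai : a i ≠ 0) (haj : a j ≠ 0) :
    ∃ u₁ u₂ : ZMod n, u₁ ≠ u₂ ∧
      ((circulant n g).Adj v u₁ ∧ (circulant n g).dist 0 u₁ = l - 1) ∧
      ((circulant n g).Adj v u₂ ∧ (circulant n g).dist 0 u₂ = l - 1) :=
  stmt12_general n f g hpos hmono hhalf v l hdist a hnorm hrep i j hij hai haj
end

section
/- Let m ≥ 1 and set g_1 = 1, g_2 = 4m+1, g_3 = 16m²+4m+1, n = 32m³+16m²+6m+1. Then the minimum of |a_1| + |a_2| + |a_3| over all integer triples (a_1,a_2,a_3) ∈ Z³ with a_1 g_1 + a_2 g_2 + a_3 g_3 = n (as integers) equals 6m+1, attained by (a_1,a_2,a_3) = (2m+1, 2m, 2m); i.e., n = (2m+1)g_1 + 2m·g_2 + 2m·g_3 and there is no representation of n as an integer combination of g_1, g_2, g_3 with fewer than 6m+1 total edges. -/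
/-- For `m ≥ 1`, `g₁ = 1`, `g₂ = 4m+1`, `g₃ = 16m²+4m+1`, `n = 32m³+16m²+6m+1` (the
generators and order of the largest known degree-6 circulant graph of diameter `3m`,
isomorphism class 1): `n = (2m+1)g₁ + 2m·g₂ + 2m·g₃`, and `6m+1` is the least value of
`|a₁|+|a₂|+|a₃|` over integer representations `a₁g₁ + a₂g₂ + a₃g₃ = n`. -/
theorem stmt14 (m : ℤ) (hm : 1 ≤ m) :
    32*m^3+16*m^2+6*m+1 = (2*m+1)*1 + (2*m)*(4*m+1) + (2*m)*(16*m^2+4*m+1) ∧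
    IsLeast {t : ℤ | ∃ a₁ a₂ a₃ : ℤ,
        a₁*1 + a₂*(4*m+1) + a₃*(16*m^2+4*m+1) = 32*m^3+16*m^2+6*m+1 ∧
        t = |a₁| + |a₂| + |a₃|} (6*m+1) := by
  refine ⟨by ring, ⟨⟨2*m+1, 2*m, 2*m, by ring, ?_⟩, ?_⟩⟩
  · rw [abs_of_nonneg (by linarith : (0:ℤ) ≤ 2*m+1),
      abs_of_nonneg (by linarith : (0:ℤ) ≤ 2*m)]
    ring
  · rintro t ⟨x, y, z, heq, rfl⟩
    set c : ℤ := 8*m^2+2*m+1 - y - 4*m*z with hc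
    have hx : x = (4*m+1)*c - z := by
      have : y = 8*m^2+2*m+1 - c - 4*m*z := by rw [hc]; ring
      linear_combination heq - (4*m+1)*this
    have hX1 : x ≤ |x| := le_abs_self x
    have hX2 : -x ≤ |x| := neg_le_abs x
    have hY1 : y ≤ |y| := le_abs_self y
    have hY2 : -y ≤ |y| := neg_le_abs y
    have hZ1 : z ≤ |z| := le_abs_self z
    have hZ2 : -z ≤ |z| := neg_le_abs z
    have hy : y = 8*m^2+2*m+1 - c - 4*m*z := by rw [hc]; ring
    rcases le_or_gt 2 c with hc2 | hc2
    · -- c ≥ 2 : |x|+|z| ≥ x+z = (4m+1)c ≥ 8m+2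
      nlinarith [mul_nonneg (by linarith : (0:ℤ) ≤ c - 2) (by linarith : (0:ℤ) ≤ 4*m+1),
        abs_nonneg y]
    · rcases le_or_gt c (-1) with hcm | hcm
      · -- c ≤ -1 : 2m·S ≥ -2mx + y + 2mz = (8m²+2m+1)(1-c)
        nlinarith [mul_nonneg (by linarith : (0:ℤ) ≤ m) (by linarith : (0:ℤ) ≤ |x| + x),
          mul_nonneg (by linarith : (0:ℤ) ≤ m) (by linarith : (0:ℤ) ≤ |z| - z),
          mul_nonneg (by linarith : (0:ℤ) ≤ m) (by linarith : (0:ℤ) ≤ |y| - y),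
          mul_nonneg (by linarith : (0:ℤ) ≤ -c - 1) (by nlinarith : (0:ℤ) ≤ 8*m^2+2*m+1),
          mul_nonneg (by linarith : (0:ℤ) ≤ m) (abs_nonneg y), sq_nonneg m]
      · have hc01 : c = 0 ∨ c = 1 := by omega
        rcases hc01 with hc0 | hc0
        · rcases le_or_gt z (2*m) with hz | hz
          · -- S ≥ z + y + z, y = 8m²+2m+1-4mz
            nlinarith [mul_nonneg (by linarith : (0:ℤ) ≤ 4*m-2) (by linarith : (0:ℤ) ≤ 2*m - z)]
          · nlinarith [mul_nonneg (by linarith : (0:ℤ) ≤ 4*m+2) (by linarith : (0:ℤ) ≤ z - (2*m+1))]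
        · rcases le_or_gt z (2*m) with hz | hz
          · -- S ≥ x + y + z
            nlinarith [mul_nonneg (by linarith : (0:ℤ) ≤ 4*m) (by linarith : (0:ℤ) ≤ 2*m - z)]
          · -- S ≥ x - y + z
            nlinarith [mul_nonneg (by linarith : (0:ℤ) ≤ 4*m) (by linarith : (0:ℤ) ≤ z - (2*m+1))]
end
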